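/- Meyers' Theorem 4': Let a < b and let f : ℝ → ℝ be differentiable at every point of the closed interval [a, b] with derivative f' continuous on [a, b]. If f'(b) * (f(b) - f(a) - (b - a) * f'(a)) > 0, then there exists ξ ∈ (a, b) such that f'(ξ) = (f(b) - f(ξ)) / (b - a). -/

import Mathlib

/-! The function `φ x = (b - a) * f' x - (f b - f x)` is continuous on `[a, b]`, and
`φ a * φ b = -(b - a) * f' b * (f b - f a - (b - a) * f' a) < 0`, so by the intermediate value
theorem `φ` vanishes at some `ξ ∈ (a, b)`, which is the required point. -/

open Set

theorem ContinuousOn.exists_mem_Ioo_eq_zero_of_mul_neg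
    {α δ : Type*} [ConditionallyCompleteLinearOrder α] [TopologicalSpace α] [OrderTopology α]
    [DenselyOrdered α] [Ring δ] [LinearOrder δ] [IsStrictOrderedRing δ] [TopologicalSpace δ]
    [OrderClosedTopology δ] {a b : α} (hab : a ≤ b) {g : α → δ} (hg : ContinuousOn g (Icc a b))
    (hsign : g a * g b < 0) : ∃ c ∈ Ioo a b, g c = 0 := by
  rcases mul_neg_iff.mp hsign with ⟨ha, hb⟩ | ⟨ha, hb⟩
  · exact intermediate_value_Ioo' hab hg ⟨hb, ha⟩
  · exact intermediate_value_Ioo hab hg ⟨ha, hb⟩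

/-- Meyers' Theorem 4'. -/
theorem meyers_theorem_4' (f f' : ℝ → ℝ) (a b : ℝ) (hab : a < b)
    (hf : ∀ x ∈ Set.Icc a b, HasDerivWithinAt f (f' x) (Set.Icc a b) x)
    (hf' : ContinuousOn f' (Set.Icc a b))
    (hcond : f' b * (f b - f a - (b - a) * f' a) > 0) :
    ∃ ξ ∈ Set.Ioo a b, f' ξ = (f b - f ξ) / (b - a) := by
  set φ : ℝ → ℝ := fun x => (b - a) * f' x - (f b - f x)
  have hfc : ContinuousOn f (Icc a b) := fun x hx => (hf x hx).continuousWithinAt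
  have hφc : ContinuousOn φ (Icc a b) :=
    (continuousOn_const.mul hf').sub (continuousOn_const.sub hfc)
  have hsign : φ a * φ b < 0 := by
    have : φ a * φ b = -((b - a) * (f' b * (f b - f a - (b - a) * f' a))) := by
      simp only [φ, sub_self]; ring
    rw [this, neg_neg_iff_pos]
    exact mul_pos (sub_pos.mpr hab) hcond
  obtain ⟨ξ, hξ, hφξ⟩ := hφc.exists_mem_Ioo_eq_zero_of_mul_neg hab.le hsign
  refine ⟨ξ, hξ, ?_⟩
  rw [eq_div_iff (sub_pos.mpr hab).ne']
  linarith [show (b - a) * f' ξ - (f b - f ξ) = 0 from hφξ]
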